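/- Let α₁, α₂, ψ₀ be real constants with α₂ ≠ 0 and set C(t) = t^{ψ₀−1} for t > 0. On the half-space {(t,x,y,z) ∈ ℝ⁴ : t > 0}, define the Bianchi I metric g = diag(−C(t)², C(t)²t^{2(α₂−1)/α₂}, C(t)²t^{2(α₂−α₁)/α₂}, C(t)²). Then the vector field X₂ = (α₂t, x, α₁y, α₂z) is a homothetic Killing vector of g with constant conformal factor ψ = α₂·ψ₀; moreover, in the special case ψ₀ = 0 (i.e. C(t) = t^{−1}), X₂ is a Killing vector of g. -/
import Mathlib


noncomputable section

/-- Partial derivative of `f` in the `μ`-th coordinate direction at `p`. -/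
def pd (μ : Fin 4) (f : (Fin 4 → ℝ) → ℝ) (p : Fin 4 → ℝ) : ℝ :=
  fderiv ℝ f p (Pi.single μ 1)

/-- `ξ` is a conformal Killing vector of the metric `g` with conformal factor `ψ`
on the domain `D`. -/
def IsCKVOn (D : (Fin 4 → ℝ) → Prop)
    (g : (Fin 4 → ℝ) → Matrix (Fin 4) (Fin 4) ℝ)
    (ξ : (Fin 4 → ℝ) → Fin 4 → ℝ) (ψ : (Fin 4 → ℝ) → ℝ) : Prop :=
  ∀ (μ ν : Fin 4) (p : Fin 4 → ℝ), D p →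
    (∑ l : Fin 4, (ξ p l * pd l (fun q => g q μ ν) p
      + g p l ν * pd μ (fun q => ξ q l) p
      + g p μ l * pd ν (fun q => ξ q l) p)) = 2 * ψ p * g p μ ν

/-- `ξ` is a Killing vector of the metric `g` on the domain `D`. -/
def IsKVOn (D : (Fin 4 → ℝ) → Prop)
    (g : (Fin 4 → ℝ) → Matrix (Fin 4) (Fin 4) ℝ)
    (ξ : (Fin 4 → ℝ) → Fin 4 → ℝ) : Prop :=
  ∀ (μ ν : Fin 4) (p : Fin 4 → ℝ), D p →
    (∑ l : Fin 4, (ξ p l * pd l (fun q => g q μ ν) p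
      + g p l ν * pd μ (fun q => ξ q l) p
      + g p μ l * pd ν (fun q => ξ q l) p)) = 0

lemma pd_congr {f h : (Fin 4 → ℝ) → ℝ} {p : Fin 4 → ℝ} (he : f =ᶠ[nhds p] h) (l : Fin 4) :
    pd l f p = pd l h p := by
  unfold pd
  rw [he.fderiv_eq]

lemma pd_const (c : ℝ) (l : Fin 4) (p : Fin 4 → ℝ) : pd l (fun _ => c) p = 0 := by
  simp [pd]

lemma pd_coord (i μ : Fin 4) (p : Fin 4 → ℝ) :
    pd μ (fun q => q i) p = if i = μ then 1 else 0 := by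
  have h : HasFDerivAt (fun q : Fin 4 → ℝ => q i)
      (ContinuousLinearMap.proj (R := ℝ) (φ := fun _ : Fin 4 => ℝ) i) p :=
    by exact (ContinuousLinearMap.proj (R := ℝ) (φ := fun _ : Fin 4 => ℝ) i).hasFDerivAt
  rw [pd, h.fderiv]
  simp [Pi.single_apply]

lemma pd_coord_mul (c : ℝ) (i μ : Fin 4) (p : Fin 4 → ℝ) :
    pd μ (fun q => c * q i) p = if i = μ then c else 0 := by
  have h : HasFDerivAt (fun q : Fin 4 → ℝ => q i)
      (ContinuousLinearMap.proj (R := ℝ) (φ := fun _ : Fin 4 => ℝ) i) p :=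
    by exact (ContinuousLinearMap.proj (R := ℝ) (φ := fun _ : Fin 4 => ℝ) i).hasFDerivAt
  have h2 := h.const_mul c
  rw [pd, h2.fderiv]
  simp [Pi.single_apply]

lemma pd_eventually_rpow (s b : ℝ) {f : (Fin 4 → ℝ) → ℝ}
    (hf : ∀ q : Fin 4 → ℝ, 0 < q 0 → f q = s * Real.rpow (q 0) b)
    {p : Fin 4 → ℝ} (hp : 0 < p 0) (l : Fin 4) :
    pd l f p = if l = 0 then s * (b * Real.rpow (p 0) (b - 1)) else 0 := by
  have hopen : IsOpen {q : Fin 4 → ℝ | 0 < q 0} :=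
    isOpen_lt continuous_const (continuous_apply 0)
  have he : f =ᶠ[nhds p] fun q => s * Real.rpow (q 0) b :=
    Filter.eventuallyEq_of_mem (hopen.mem_nhds hp) hf
  rw [pd_congr he l]
  have h1 : HasDerivAt (fun x : ℝ => x ^ b) (b * (p 0) ^ (b - 1)) (p 0) :=
    Real.hasDerivAt_rpow_const (Or.inl hp.ne')
  have h2 : HasFDerivAt (fun q : Fin 4 → ℝ => q 0)
      (ContinuousLinearMap.proj (R := ℝ) (φ := fun _ : Fin 4 => ℝ) 0) p :=
    by exact (ContinuousLinearMap.proj (R := ℝ) (φ := fun _ : Fin 4 => ℝ) 0).hasFDerivAt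
  have h3 := (h1.comp_hasFDerivAt p h2).const_mul s
  have h4 : HasFDerivAt (fun q : Fin 4 → ℝ => s * Real.rpow (q 0) b)
      (s • ((b * (p 0) ^ (b - 1)) •
        ContinuousLinearMap.proj (R := ℝ) (φ := fun _ : Fin 4 => ℝ) 0)) p := by exact h3
  rw [pd, h4.fderiv]
  rcases eq_or_ne l 0 with h | h
  · simp [Pi.single_apply, h, Real.rpow_eq_pow, mul_comm, mul_assoc]
  · simp [Pi.single_apply, h, Ne.symm h, Real.rpow_eq_pow]

/-- with `C(t) = t^{ψ₀−1}` on `t > 0`, the vector field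
`X₂ = α₂ t∂_t + x∂_x + α₁ y∂_y + α₂ z∂_z` is a homothetic Killing vector of the Bianchi I
metric with constant conformal factor `ψ = α₂ ψ₀`; when `ψ₀ = 0` it is a Killing vector. -/
theorem bianchiI_X2_is_HV (α₁ α₂ ψ₀ : ℝ) (hα₂ : α₂ ≠ 0)
    (C : ℝ → ℝ) (hC : ∀ t, 0 < t → C t = Real.rpow t (ψ₀ - 1))
    (g : (Fin 4 → ℝ) → Matrix (Fin 4) (Fin 4) ℝ)
    (hg : g = fun p => Matrix.diagonal
      ![-(C (p 0)) ^ 2,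
        (C (p 0)) ^ 2 * Real.rpow (p 0) (2 * (α₂ - 1) / α₂),
        (C (p 0)) ^ 2 * Real.rpow (p 0) (2 * (α₂ - α₁) / α₂),
        (C (p 0)) ^ 2])
    (ξ : (Fin 4 → ℝ) → Fin 4 → ℝ)
    (hξ : ξ = fun p => ![α₂ * p 0, p 1, α₁ * p 2, α₂ * p 3]) :
    IsCKVOn (fun p => 0 < p 0) g ξ (fun _ => α₂ * ψ₀) ∧
      (ψ₀ = 0 → IsKVOn (fun p => 0 < p 0) g ξ) := by
  subst hg hξ
  have hCsq : ∀ t : ℝ, 0 < t → (C t) ^ 2 = Real.rpow t (2 * ψ₀ - 2) := by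
    intro t ht
    rw [hC t ht, Real.rpow_eq_pow, Real.rpow_eq_pow,
      ← Real.rpow_natCast (t ^ (ψ₀ - 1)) 2, ← Real.rpow_mul ht.le]
    norm_num
    ring_nf
  have main : IsCKVOn (fun p => 0 < p 0)
      (fun p => Matrix.diagonal
        ![-(C (p 0)) ^ 2,
          (C (p 0)) ^ 2 * Real.rpow (p 0) (2 * (α₂ - 1) / α₂),
          (C (p 0)) ^ 2 * Real.rpow (p 0) (2 * (α₂ - α₁) / α₂),
          (C (p 0)) ^ 2])
      (fun p => ![α₂ * p 0, p 1, α₁ * p 2, α₂ * p 3]) (fun _ => α₂ * ψ₀) := by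
    intro μ ν p hp
    have P0 : ∀ l, pd l (fun q => -C (q 0) ^ 2) p
        = if l = 0 then (-1) * ((2 * ψ₀ - 2) * Real.rpow (p 0) (2 * ψ₀ - 2 - 1)) else 0 :=
      pd_eventually_rpow (-1) (2 * ψ₀ - 2)
        (fun q hq => by rw [hCsq _ hq]; ring) hp
    have P1 : ∀ l, pd l (fun q => C (q 0) ^ 2 * (q 0) ^ (2 * (α₂ - 1) / α₂)) p
        = if l = 0 then 1 * ((2 * ψ₀ - 2 + 2 * (α₂ - 1) / α₂)
            * Real.rpow (p 0) (2 * ψ₀ - 2 + 2 * (α₂ - 1) / α₂ - 1)) else 0 :=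
      pd_eventually_rpow 1 (2 * ψ₀ - 2 + 2 * (α₂ - 1) / α₂)
        (fun q hq => by rw [hCsq _ hq, one_mul, Real.rpow_eq_pow, ← Real.rpow_add hq]; rfl) hp
    have P2 : ∀ l, pd l (fun q => C (q 0) ^ 2 * (q 0) ^ (2 * (α₂ - α₁) / α₂)) p
        = if l = 0 then 1 * ((2 * ψ₀ - 2 + 2 * (α₂ - α₁) / α₂)
            * Real.rpow (p 0) (2 * ψ₀ - 2 + 2 * (α₂ - α₁) / α₂ - 1)) else 0 :=
      pd_eventually_rpow 1 (2 * ψ₀ - 2 + 2 * (α₂ - α₁) / α₂)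
        (fun q hq => by rw [hCsq _ hq, one_mul, Real.rpow_eq_pow, ← Real.rpow_add hq]; rfl) hp
    have P3 : ∀ l, pd l (fun q => C (q 0) ^ 2) p
        = if l = 0 then 1 * ((2 * ψ₀ - 2) * Real.rpow (p 0) (2 * ψ₀ - 2 - 1)) else 0 :=
      pd_eventually_rpow 1 (2 * ψ₀ - 2)
        (fun q hq => by rw [hCsq _ hq]; ring) hp
    have hT : p 0 ≠ 0 := hp.ne'
    fin_cases μ <;> fin_cases ν <;>
      simp [Fin.sum_univ_four, Matrix.diagonal, Matrix.of_apply,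
        pd_const, pd_coord, pd_coord_mul, P0, P1, P2, P3, hCsq _ hp,
        Real.rpow_sub hp, Real.rpow_add hp, Real.rpow_one] <;>
      field_simp <;> ring
  refine ⟨main, fun h0 μ ν p hp => ?_⟩
  rw [main μ ν p hp, h0]
  ring
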